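/- arXiv:2309.13639 — 2 statements merged into one kernel-verified Lean document; each statement's English description precedes it below -/
import Mathlib

section
/- Let P be a polymatroid over [n] with rank function f, let t ∈ [n], and let α_t = f([n]) − f([n]∖{t}) and β_t = f({t}). For an integer j, the set P^t_j = {a ∈ P : a_t = j} is nonempty if and only if α_t ≤ j ≤ β_t; moreover, for each such j, P^t_j is a polymatroid over [n], and its image P̂^t_j under deleting the t-th coordinate is a polymatroid over the ground set [n]∖{t}. -/
open scoped BigOperators

/-- A polymatroid (set of integer bases) over the ground set `E` inside the ambient
index type `ι`: a nonempty finite set of integer vectors supported on `E`, all with the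
same coordinate sum, satisfying the exchange axiom. -/
def IsPolymatroidOn {ι : Type} [DecidableEq ι] (E : Finset ι) (P : Set (ι → ℤ)) : Prop :=
  P.Nonempty ∧ P.Finite ∧
  (∀ a ∈ P, ∀ i, i ∉ E → a i = 0) ∧
  (∀ a ∈ P, ∀ b ∈ P, (∑ i ∈ E, a i) = ∑ i ∈ E, b i) ∧
  (∀ a ∈ P, ∀ b ∈ P, ∀ i, b i < a i →
    ∃ j, a j < b j ∧ (a - Pi.single i 1 + Pi.single j 1) ∈ P ∧
      (b + Pi.single i 1 - Pi.single j 1) ∈ P)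

/-- The rank function `f_P(I) = max_{a ∈ P} ∑_{i ∈ I} a i`. -/
noncomputable def rankFn {ι : Type} (P : Set (ι → ℤ)) (I : Finset ι) : ℤ :=
  sSup ((fun a => ∑ i ∈ I, a i) '' P)

/-- `i ∈ E` is internally active for `a` with respect to `P`:
`a - e i + e j ∉ P` for all `j < i` in the ground set. -/
def IntActive {ι : Type} [LinearOrder ι] (E : Finset ι) (P : Set (ι → ℤ))
    (a : ι → ℤ) (i : ι) : Prop :=
  i ∈ E ∧ ∀ j ∈ E, j < i → (a - Pi.single i 1 + Pi.single j 1) ∉ P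

/-- `i ∈ E` is externally active for `a` with respect to `P`:
`a + e i - e j ∉ P` for all `j < i` in the ground set. -/
def ExtActive {ι : Type} [LinearOrder ι] (E : Finset ι) (P : Set (ι → ℤ))
    (a : ι → ℤ) (i : ι) : Prop :=
  i ∈ E ∧ ∀ j ∈ E, j < i → (a + Pi.single i 1 - Pi.single j 1) ∉ P

/-- The polymatroid Tutte polynomial `𝒯_P(x,y)` as a polynomial in `ℤ[x,y]`,
with `x = X 0`, `y = X 1`. -/
noncomputable def tuttePoly {ι : Type} [LinearOrder ι] (E : Finset ι) (P : Set (ι → ℤ)) :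
    MvPolynomial (Fin 2) ℤ :=
  ∑ᶠ a ∈ P,
    MvPolynomial.X 0 ^ ({i | IntActive E P a i} \ {i | ExtActive E P a i}).ncard *
      MvPolynomial.X 1 ^ ({i | ExtActive E P a i} \ {i | IntActive E P a i}).ncard *
      (MvPolynomial.X 0 + MvPolynomial.X 1 - 1) ^
        ({i | IntActive E P a i} ∩ {i | ExtActive E P a i}).ncard

/-- The interior polynomial `I_P(x) = ∑_{a ∈ P} x^{|E| - |Int(a)|}`. -/
noncomputable def interiorPoly {ι : Type} [LinearOrder ι] (E : Finset ι) (P : Set (ι → ℤ)) :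
    Polynomial ℤ :=
  ∑ᶠ a ∈ P, Polynomial.X ^ (E.card - {i | IntActive E P a i}.ncard)

/-- The exterior polynomial `X_P(y) = ∑_{a ∈ P} y^{|E| - |Ext(a)|}`. -/
noncomputable def exteriorPoly {ι : Type} [LinearOrder ι] (E : Finset ι) (P : Set (ι → ℤ)) :
    Polynomial ℤ :=
  ∑ᶠ a ∈ P, Polynomial.X ^ (E.card - {i | ExtActive E P a i}.ncard)

/-- The slice `P^t_j = {a ∈ P | a t = j}`. -/
def sliceAt {ι : Type} (P : Set (ι → ℤ)) (t : ι) (j : ℤ) : Set (ι → ℤ) :=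
  {a ∈ P | a t = j}

/-- The projection `P̂^t_j` of the slice `P^t_j` under deleting the `t`-th coordinate
(encoded by setting the `t`-th coordinate to `0`). -/
def projAt {ι : Type} [DecidableEq ι] (P : Set (ι → ℤ)) (t : ι) (j : ℤ) : Set (ι → ℤ) :=
  (fun a => Function.update a t 0) '' sliceAt P t j

/-- The set of integer points associated to a rank function `g` on the ground set `E`:
`{a | ∑_{i ∈ I} a i ≤ g I for all I ⊆ E, ∑_{i ∈ E} a i = g E}` (supported on `E`). -/
def polymatroidOfRank {ι : Type} (E : Finset ι) (g : Finset ι → ℤ) : Set (ι → ℤ) :=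
  {a | (∀ i, i ∉ E → a i = 0) ∧ (∀ I ⊆ E, (∑ i ∈ I, a i) ≤ g I) ∧ (∑ i ∈ E, a i) = g E}

/-- The deletion `P ∖ A`: the polymatroid on `E ∖ A` with rank function `T ↦ f_P(T)`. -/
noncomputable def deletion {ι : Type} [DecidableEq ι] (E : Finset ι) (P : Set (ι → ℤ))
    (A : Finset ι) : Set (ι → ℤ) :=
  polymatroidOfRank (E \ A) fun T => rankFn P T

/-- The contraction `P / A`: the polymatroid on `E ∖ A` with rank function
`T ↦ f_P(T ∪ A) - f_P(A)`. -/
noncomputable def contraction {ι : Type} [DecidableEq ι] (E : Finset ι) (P : Set (ι → ℤ))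
    (A : Finset ι) : Set (ι → ℤ) :=
  polymatroidOfRank (E \ A) fun T => rankFn P (T ∪ A) - rankFn P A

/-- The bipartite graph `Bip H` of the hypergraph whose hyperedges are indexed by `ε`
with vertex sets given by `m`: color classes `V` and `ε`, with `v` adjacent to `e`
iff `v ∈ m e`. -/
def bipGraph {V ε : Type} (m : ε → Finset V) : SimpleGraph (V ⊕ ε) :=
  SimpleGraph.fromRel fun a b => ∃ v e, a = Sum.inl v ∧ b = Sum.inr e ∧ v ∈ m e

/-- The vertex set of `Bip H|_{E'}`: the hyperedges in `E'` together with all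
vertices incident with them. -/
def bipVerts {V ε : Type} (m : ε → Finset V) (E' : Finset ε) : Set (V ⊕ ε) :=
  {x | (∃ e ∈ E', x = Sum.inr e) ∨ ∃ v, x = Sum.inl v ∧ ∃ e ∈ E', v ∈ m e}

/-- `μ(E') = |⋃ E'| - c(E')` for `E' ≠ ∅`, and `μ(∅) = 0`, where `c(E')` is the number
of connected components of `Bip H|_{E'}`. -/
noncomputable def muFn {V ε : Type} [DecidableEq V] [DecidableEq ε] (m : ε → Finset V) (E' : Finset ε) : ℤ :=
  if E' = ∅ then 0
  else ((E'.biUnion m).card : ℤ) -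
    (Nat.card ((bipGraph m).induce (bipVerts m E')).ConnectedComponent : ℤ)

section Helpers
variable {ι : Type} [DecidableEq ι] {E : Finset ι} {P : Set (ι → ℤ)}

lemma rankFn_eq_sum (hP : IsPolymatroidOn E P) {a : ι → ℤ} (ha : a ∈ P) :
    rankFn P E = ∑ i ∈ E, a i := by
  obtain ⟨hne, hfin, _, hsum, _⟩ := hP
  obtain ⟨b, hb, hb2⟩ := Set.Nonempty.csSup_mem (hne.image (fun a => ∑ i ∈ E, a i)) (hfin.image _)
  rw [rankFn, ← hb2]
  exact hsum b hb a ha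

lemma sum_le_rankFn (hP : IsPolymatroidOn E P) {a : ι → ℤ} (ha : a ∈ P) (I : Finset ι) :
    (∑ i ∈ I, a i) ≤ rankFn P I :=
  le_csSup ((hP.2.1.image _).bddAbove) ⟨a, ha, rfl⟩

lemma exists_rankFn_eq (hP : IsPolymatroidOn E P) (I : Finset ι) :
    ∃ a ∈ P, rankFn P I = ∑ i ∈ I, a i := by
  obtain ⟨b, hb, hb2⟩ :=
    Set.Nonempty.csSup_mem (hP.1.image (fun a => ∑ i ∈ I, a i)) (hP.2.1.image _)
  exact ⟨b, hb, hb2.symm⟩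

lemma step_up (hP : IsPolymatroidOn E P) {a b : ι → ℤ} (ha : a ∈ P) (hb : b ∈ P)
    (t : ι) (hab : a t < b t) : ∃ a' ∈ P, a' t = a t + 1 := by
  obtain ⟨k, hk1, _, hk3⟩ := hP.2.2.2.2 b hb a ha t hab
  have hkt : k ≠ t := fun h => by subst h; omega
  refine ⟨_, hk3, ?_⟩
  simp [Pi.single_apply, hkt, Ne.symm hkt]

lemma exists_of_le (hP : IsPolymatroidOn E P) (t : ι) {j : ℤ}
    {b : ι → ℤ} (hb : b ∈ P) (hjb : j ≤ b t) :
    ∀ n : ℕ, ∀ a ∈ P, j - a t = n → ∃ c ∈ P, c t = j := by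
  intro n
  induction n with
  | zero => intro a ha h; exact ⟨a, ha, by omega⟩
  | succ m ih =>
    intro a ha h
    obtain ⟨a', ha', ha't⟩ := step_up hP ha hb t (by omega)
    exact ih a' ha' (by omega)

end Helpers

/-- For `t` in the ground set, the slice `P^t_j = {a ∈ P | a t = j}` is
nonempty iff `α_t ≤ j ≤ β_t`, where `α_t = f(E) - f(E∖{t})` and `β_t = f({t})`;
moreover for such `j` the slice is a polymatroid over `E` and its projection under
deleting the `t`-th coordinate is a polymatroid over `E ∖ {t}`. -/
theorem statement0 {ι : Type} [LinearOrder ι] (E : Finset ι) (P : Set (ι → ℤ))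
    (hP : IsPolymatroidOn E P) (t : ι) (ht : t ∈ E) (j : ℤ) :
    ((sliceAt P t j).Nonempty ↔
      rankFn P E - rankFn P (E.erase t) ≤ j ∧ j ≤ rankFn P {t}) ∧
    (rankFn P E - rankFn P (E.erase t) ≤ j → j ≤ rankFn P {t} →
      IsPolymatroidOn E (sliceAt P t j) ∧ IsPolymatroidOn (E.erase t) (projAt P t j)) := by
  have herase : ∀ a : ι → ℤ, ∑ i ∈ E.erase t, a i = (∑ i ∈ E, a i) - a t := by
    intro a
    rw [← Finset.add_sum_erase E a ht]; ring
  have hβle : ∀ a ∈ P, a t ≤ rankFn P {t} := fun a ha => by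
    simpa using sum_le_rankFn hP ha {t}
  have hαle : ∀ a ∈ P, rankFn P E - rankFn P (E.erase t) ≤ a t := fun a ha => by
    have h1 := sum_le_rankFn hP ha (E.erase t)
    rw [herase a] at h1
    have h2 := rankFn_eq_sum hP ha
    omega
  -- the iff
  have hiff : (sliceAt P t j).Nonempty ↔
      rankFn P E - rankFn P (E.erase t) ≤ j ∧ j ≤ rankFn P {t} := by
    constructor
    · rintro ⟨a, ha, hat⟩
      exact ⟨hat ▸ hαle a ha, hat ▸ hβle a ha⟩
    · rintro ⟨h1, h2⟩
      obtain ⟨c, hc, hc2⟩ := exists_rankFn_eq hP (E.erase t)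
      have hct : c t ≤ j := by
        have hE := rankFn_eq_sum hP hc
        rw [herase c] at hc2
        omega
      obtain ⟨b, hb, hb2⟩ := exists_rankFn_eq hP {t}
      simp only [Finset.sum_singleton] at hb2
      have hjb : j ≤ b t := by omega
      obtain ⟨d, hd, hdt⟩ := exists_of_le hP t hb hjb (j - c t).toNat c hc
        (by omega)
      exact ⟨d, hd, hdt⟩
  refine ⟨hiff, fun h1 h2 => ?_⟩
  have hne : (sliceAt P t j).Nonempty := hiff.mpr ⟨h1, h2⟩
  obtain ⟨-, hfin, hsupp, hsum, hex⟩ := hP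
  -- slice exchange, strengthened
  have hsex : ∀ a ∈ sliceAt P t j, ∀ b ∈ sliceAt P t j, ∀ i, b i < a i →
      ∃ k, k ≠ t ∧ i ≠ t ∧ a k < b k ∧
        (a - Pi.single i 1 + Pi.single k 1) ∈ sliceAt P t j ∧
        (b + Pi.single i 1 - Pi.single k 1) ∈ sliceAt P t j := by
    rintro a ⟨ha, hat⟩ b ⟨hb, hbt⟩ i hi
    have hit : i ≠ t := fun h => by subst h; omega
    obtain ⟨k, hk1, hk2, hk3⟩ := hex a ha b hb i hi
    have hkt : k ≠ t := fun h => by subst h; omega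
    refine ⟨k, hkt, hit, hk1, ⟨hk2, ?_⟩, ⟨hk3, ?_⟩⟩ <;>
      simp [Pi.single_apply, Ne.symm hkt, Ne.symm hit, hat, hbt]
  have hslice : IsPolymatroidOn E (sliceAt P t j) := by
    refine ⟨hne, hfin.subset (fun a ha => ha.1), fun a ha => hsupp a ha.1,
      fun a ha b hb => hsum a ha.1 b hb.1, fun a ha b hb i hi => ?_⟩
    obtain ⟨k, _, _, h3, h4, h5⟩ := hsex a ha b hb i hi
    exact ⟨k, h3, h4, h5⟩
  refine ⟨hslice, ?_, (hfin.subset (fun a ha => ha.1)).image _, ?_, ?_, ?_⟩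
  · exact hne.image _
  · rintro a ⟨c, hc, rfl⟩ i hiE
    dsimp only
    rcases eq_or_ne i t with rfl | hit
    · simp
    · rw [Function.update_of_ne hit]
      exact hsupp c hc.1 i (fun h => hiE (Finset.mem_erase.mpr ⟨hit, h⟩))
  · rintro a ⟨c, hc, rfl⟩ b ⟨d, hd, rfl⟩
    have hc' : ∀ x ∈ E.erase t, Function.update c t 0 x = c x :=
      fun x hx => Function.update_of_ne (Finset.ne_of_mem_erase hx) _ _
    have hd' : ∀ x ∈ E.erase t, Function.update d t 0 x = d x :=
      fun x hx => Function.update_of_ne (Finset.ne_of_mem_erase hx) _ _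
    rw [Finset.sum_congr rfl hc', Finset.sum_congr rfl hd', herase c, herase d,
      hsum c hc.1 d hd.1, hc.2, hd.2]
  · rintro a ⟨c, hc, rfl⟩ b ⟨d, hd, rfl⟩ i hi
    dsimp only at hi ⊢
    have hit : i ≠ t := by
      rintro rfl; simp at hi
    rw [Function.update_of_ne hit, Function.update_of_ne hit] at hi
    obtain ⟨k, hkt, -, hk1, hk2, hk3⟩ := hsex c hc d hd i hi
    refine ⟨k, ?_, ⟨_, hk2, ?_⟩, ⟨_, hk3, ?_⟩⟩
    · rwa [Function.update_of_ne hkt, Function.update_of_ne hkt]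
    · funext x
      rcases eq_or_ne x t with rfl | hxt
      · simp [Function.update_apply, Pi.single_apply, hit, hkt, Ne.symm hit, Ne.symm hkt]
      · simp [Function.update_apply, Pi.single_apply, hxt, hit, hkt, Ne.symm hit, Ne.symm hkt]
    · funext x
      rcases eq_or_ne x t with rfl | hxt
      · simp [Function.update_apply, Pi.single_apply, hit, hkt, Ne.symm hit, Ne.symm hkt]
      · simp [Function.update_apply, Pi.single_apply, hxt, hit, hkt, Ne.symm hit, Ne.symm hkt]
end

section
/- Let P be a polymatroid over [n], let c ∈ ℤ, and let P'' = {a ∈ P : a_1 ≤ c}. If P'' is nonempty (so that P'' is a polymatroid over [n]), then Ext_P(b) = Ext_{P''}(b) for every b ∈ P''. -/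
open scoped BigOperators

/-- truncating a polymatroid at its smallest coordinate does not change
external activity: with `P'' = {a ∈ P | a t ≤ c}` nonempty (`t` the least ground set
element), `P''` is a polymatroid and `Ext_P(b) = Ext_{P''}(b)` for all `b ∈ P''`. -/
theorem statement8 {ι : Type} [LinearOrder ι] (E : Finset ι) (P : Set (ι → ℤ))
    (hP : IsPolymatroidOn E P) (t : ι) (ht : t ∈ E) (hmin : ∀ i ∈ E, t ≤ i) (c : ℤ)
    (hne : {a ∈ P | a t ≤ c}.Nonempty) :
    IsPolymatroidOn E {a ∈ P | a t ≤ c} ∧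
    ∀ b ∈ {a ∈ P | a t ≤ c}, ∀ i,
      (ExtActive E P b i ↔ ExtActive E {a ∈ P | a t ≤ c} b i) := by
  obtain ⟨hPne, hPfin, hsupp, hsum, hexch⟩ := hP
  constructor
  · refine ⟨hne, hPfin.subset (fun a ha => ha.1), fun a ha => hsupp a ha.1,
      fun a ha b hb => hsum a ha.1 b hb.1, ?_⟩
    intro a ha b hb i hlt
    obtain ⟨j, hj, ha', hb'⟩ := hexch a ha.1 b hb.1 i hlt
    have hij : i ≠ j := by rintro rfl; omega
    refine ⟨j, hj, ⟨ha', ?_⟩, ⟨hb', ?_⟩⟩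
    · have hac : a t ≤ c := ha.2
      have hbc : b t ≤ c := hb.2
      simp only [Pi.add_apply, Pi.sub_apply, Pi.single_apply]
      rcases eq_or_ne t i with rfl | hti <;> rcases eq_or_ne t j with rfl | htj <;>
        simp_all <;> omega
    · have hac : a t ≤ c := ha.2
      have hbc : b t ≤ c := hb.2
      simp only [Pi.add_apply, Pi.sub_apply, Pi.single_apply]
      rcases eq_or_ne t i with rfl | hti <;> rcases eq_or_ne t j with rfl | htj <;>
        simp_all <;> omega
  · intro b hb i
    constructor
    · rintro ⟨hiE, h⟩
      exact ⟨hiE, fun j hjE hji hmem => h j hjE hji hmem.1⟩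
    · rintro ⟨hiE, h⟩
      refine ⟨hiE, fun j hjE hji hmem => h j hjE hji ⟨hmem, ?_⟩⟩
      have hit : t ≠ i := fun he => absurd (hmin j hjE) (not_le.mpr (he ▸ hji))
      have hbc : b t ≤ c := hb.2
      simp only [Pi.add_apply, Pi.sub_apply, Pi.single_apply]
      rcases eq_or_ne t j with rfl | htj <;> simp_all <;> omega
end
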